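/- For any numerical semigroup S = ⟨n₁,…,n_k⟩ with n₁ < ⋯ < n_k, setting N = 2k n₂ n_k² + n₁ n_k, we have Δ(n) = Δ(n − n₁n_k) for every n ∈ S with n ≥ N. Consequently Δ(S) = ⋃_{n ∈ S, n < N} Δ(n). -/

import Mathlib

/-- The set of factorization lengths of `n` over the generators `gens`. -/
def lenSet (k : ℕ) (gens : Fin k → ℕ) (n : ℕ) : Set ℕ :=
  {l | ∃ x : Fin k → ℕ, n = ∑ i, x i * gens i ∧ l = ∑ i, x i}

/-- The delta set Δ(n): gaps between consecutive factorization lengths of n. -/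
def deltaSet (k : ℕ) (gens : Fin k → ℕ) (n : ℕ) : Set ℕ :=
  {d | 0 < d ∧ ∃ l, l ∈ lenSet k gens n ∧ l + d ∈ lenSet k gens n ∧
    ∀ j, l < j → j < l + d → j ∉ lenSet k gens n}

/-!
Write `a = n₁`, `b = n_k`, `t = b - a`, and `L(x)` for the set of factorization lengths of `x`.
Trading `t` copies of a generator `nᵢ` for `b - nᵢ` copies of `a` and `nᵢ - a` copies of `b`
preserves value and length, so every factorization can be replaced by one whose middle
coefficients are below `t`. For `x ≥ 2k b²` these reduced factorizations show that

* every length of `x + ab` is the length of a factorization containing `b` copies of `a` or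
  `a` copies of `b`, so `L(x + ab) = (L(x) ∪ (L(x) + t)) + a`;
* a length `p` with `p + t ∉ L(x)` is about `x / a`, a length `q` with `q - t ∉ L(x)` is about
  `x / b`, hence `q < p`.

The second point says exactly that adjoining `L(x) + t` to `L(x)` neither creates nor destroys
gaps, so `Δ(x + ab) = Δ(x)`; the description of `Δ(S)` follows by descending from `n` to `n - ab`.
-/

def gapSet (A : Set ℕ) : Set ℕ :=
  {d | 0 < d ∧ ∃ l ∈ A, l + d ∈ A ∧ ∀ j, l < j → j < l + d → j ∉ A}

theorem deltaSet_eq_gapSet (k : ℕ) (g : Fin k → ℕ) (n : ℕ) :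
    deltaSet k g n = gapSet (lenSet k g n) := rfl

namespace gapSet

variable {A : Set ℕ}

theorem image_add_const (s : ℕ) : gapSet ((· + s) '' A) = gapSet A := by
  ext d
  constructor
  · rintro ⟨hd, _, ⟨u, hu, rfl⟩, ⟨v, hv, hvu⟩, hgap⟩
    dsimp only at hvu hgap
    obtain rfl : v = u + d := by omega
    exact ⟨hd, u, hu, hv, fun j hj₁ hj₂ hj ↦
      hgap (j + s) (by omega) (by omega) (Set.mem_image_of_mem _ hj)⟩
  · rintro ⟨hd, u, hu, hud, hgap⟩
    refine ⟨hd, u + s, Set.mem_image_of_mem _ hu, ?_, ?_⟩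
    · simpa only [add_right_comm] using Set.mem_image_of_mem (· + s) hud
    · rintro _ hj₁ hj₂ ⟨w, hw, rfl⟩
      dsimp only at hj₁ hj₂
      exact hgap w (by omega) (by omega) hw

variable {t : ℕ} (h : ∀ p ∈ A, ∀ q ∈ A, p ≤ q → p + t ∈ A ∨ q ∈ (· + t) '' A)
include h

theorem subset_union_image_add : gapSet A ⊆ gapSet (A ∪ (· + t) '' A) := by
  rintro d ⟨hd, u, hu, hud, hgap⟩
  by_cases hhole : ∃ r ∈ A, u < r + t ∧ r + t < u + d
  · obtain ⟨r, hr, hr₁, hr₂⟩ := hhole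
    have hr' : r + t ∉ A := hgap _ hr₁ hr₂
    have ht : 0 < t := by
      by_contra! ht
      exact hgap r (by omega) (by omega) (by simpa [Nat.le_zero.mp ht] using hr)
    have hdt : d ≤ t := by
      rcases h u hu (u + d) hud (by omega) with hut | ⟨v, hv, hvd⟩
      · by_contra! hlt
        exact hgap _ (by omega) (by omega) hut
      · dsimp only at hvd
        by_contra! hlt
        exact hgap v (by omega) (by omega) hv
    refine ⟨hd, u + t, Or.inr (Set.mem_image_of_mem _ hu), ?_, ?_⟩
    · exact Or.inr ⟨u + d, hud, add_right_comm u d t⟩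
    · rintro j hj₁ hj₂ (hj | ⟨w, hw, rfl⟩)
      · rcases h r hr j hj (by omega) with h' | ⟨w, hw, rfl⟩
        · exact hr' h'
        · dsimp only at hj₁ hj₂
          exact hgap w (by omega) (by omega) hw
      · dsimp only at hj₁ hj₂
        exact hgap w (by omega) (by omega) hw
  · push Not at hhole
    refine ⟨hd, u, Or.inl hu, Or.inl hud, ?_⟩
    rintro j hj₁ hj₂ (hj | ⟨w, hw, rfl⟩)
    · exact hgap j hj₁ hj₂ hj
    · dsimp only at hj₁ hj₂
      exact absurd (hhole w hw hj₁) (by omega)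

theorem union_image_add_subset : gapSet (A ∪ (· + t) '' A) ⊆ gapSet A := by
  rintro d ⟨hd, s, hs, hsd, hgap⟩
  have shift_gap : ∀ u ∈ A, u + t = s → u + d ∈ A → d ∈ gapSet A := fun u hu hus hud ↦
    ⟨hd, u, hu, hud, fun j hj₁ hj₂ hj ↦
      hgap (j + t) (by omega) (by omega) (Or.inr (Set.mem_image_of_mem _ hj))⟩
  by_cases hsA : s ∈ A
  · by_cases hsd' : s + d ∈ A
    · exact ⟨hd, s, hsA, hsd', fun j hj₁ hj₂ hj ↦ hgap j hj₁ hj₂ (Or.inl hj)⟩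
    obtain ⟨v, hv, hvs⟩ := hsd.resolve_left hsd'
    dsimp only at hvs
    by_cases hs' : s ∈ (· + t) '' A
    · obtain ⟨w, hw, rfl⟩ := hs'
      dsimp only at hvs
      exact shift_gap w hw rfl (by convert hv using 1; omega)
    have hvs' : v ≤ s := by
      have hne : v ≠ s + d := fun e ↦ hsd' (e ▸ hv)
      by_contra! hlt
      exact hgap v hlt (by omega) (Or.inl hv)
    rcases h v hv s hsA hvs' with h' | h'
    · exact absurd (hvs ▸ h') hsd'
    · exact absurd h' hs'
  · obtain ⟨p, hp, rfl⟩ := hs.resolve_left hsA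
    dsimp only at hsA hsd hgap shift_gap
    by_cases hsd' : p + t + d ∈ (· + t) '' A
    · obtain ⟨q, hq, hqd⟩ := hsd'
      dsimp only at hqd
      exact shift_gap p hp rfl (by convert hq using 1; omega)
    have hq : p + t + d ∈ A := hsd.resolve_right hsd'
    rcases h p hp _ hq (by omega) with h' | h'
    · exact (hsA h').elim
    · exact absurd h' hsd'

theorem union_image_add : gapSet (A ∪ (· + t) '' A) = gapSet A :=
  (union_image_add_subset h).antisymm (subset_union_image_add h)

end gapSet

theorem lt_of_le_mul_add_of_mul_le_add {k a b x p q : ℕ} (hk : 0 < k) (hab : a < b)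
    (hx : 2 * k * b ^ 2 ≤ x) (hp : x ≤ a * p + k * (b * (b - a)))
    (hq : b * q ≤ x + k * (b * (b - a))) : q < p := by
  obtain ⟨t, rfl⟩ := Nat.exists_eq_add_of_lt hab
  rw [show a + t + 1 - a = t + 1 by omega] at hp hq
  by_contra! hpq
  have h : (t + 1) * x ≤ (t + 1) * ((2 * a + t + 1) * (k * (a + t + 1))) := by
    nlinarith [Nat.mul_le_mul_left (a * (a + t + 1)) hpq]
  nlinarith [Nat.le_of_mul_le_mul_left h (Nat.succ_pos t)]

section Factorization

variable {k : ℕ} {g : Fin k → ℕ} {n x l : ℕ}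

theorem mem_lenSet_iff : l ∈ lenSet k g n ↔ ∃ z : Fin k → ℕ, z ⬝ᵥ g = n ∧ z ⬝ᵥ 1 = l := by
  simp only [lenSet, Set.mem_ofPred_eq, dotProduct_one]
  exact exists_congr fun z ↦ and_congr eq_comm eq_comm

theorem dotProduct_mem_lenSet (z : Fin k → ℕ) : z ⬝ᵥ 1 ∈ lenSet k g (z ⬝ᵥ g) :=
  mem_lenSet_iff.2 ⟨z, rfl, rfl⟩

theorem add_mem_lenSet_add_mul (hl : l ∈ lenSet k g n) (j : Fin k) (c : ℕ) :
    l + c ∈ lenSet k g (n + c * g j) := by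
  obtain ⟨z, rfl, rfl⟩ := mem_lenSet_iff.1 hl
  exact mem_lenSet_iff.2 ⟨z + Pi.single j c, by simp [add_dotProduct], by simp [add_dotProduct]⟩

theorem mem_closure_range_of_nonempty_lenSet (h : (lenSet k g n).Nonempty) :
    n ∈ AddSubmonoid.closure (Set.range g) := by
  obtain ⟨_, z, rfl, -⟩ := h
  exact AddSubmonoid.mem_closure_range_iff_of_fintype.2 ⟨z, rfl⟩

theorem exists_eq_add_single {z : Fin k → ℕ} {i : Fin k} {c : ℕ} (h : c ≤ z i) :
    ∃ w, z = w + (Pi.single i c : Fin k → ℕ) :=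
  ⟨Function.update z i (z i - c), funext fun j ↦ by
    rcases eq_or_ne j i with rfl | hj <;> simp [*]⟩

theorem add_single_dotProduct (w v : Fin k → ℕ) (i : Fin k) (c : ℕ) :
    (w + Pi.single i c) ⬝ᵥ v = w ⬝ᵥ v + c * v i := by
  rw [add_dotProduct, single_dotProduct]

theorem dotProduct_le_mul {z v : Fin k → ℕ} {C : ℕ} (h : ∀ i, z i * v i ≤ C) :
    z ⬝ᵥ v ≤ k * C := by
  simpa [dotProduct] using Finset.sum_le_card_nsmul Finset.univ _ C fun i _ ↦ h i

variable {i₀ i₁ : Fin k} (h₀ : ∀ i, g i₀ ≤ g i) (h₁ : ∀ i, g i ≤ g i₁) (hlt : g i₀ < g i₁)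
include h₀ h₁ hlt

theorem exists_dotProduct_eq_forall_lt (z : Fin k → ℕ) :
    ∃ z' : Fin k → ℕ, z' ⬝ᵥ g = z ⬝ᵥ g ∧ z' ⬝ᵥ 1 = z ⬝ᵥ 1 ∧
      ∀ i, i ≠ i₀ → i ≠ i₁ → z' i < g i₁ - g i₀ := by
  set t := g i₁ - g i₀
  let q : Fin k → ℕ := fun i ↦ if i = i₀ ∨ i = i₁ then 0 else z i / t
  let w : Fin k → ℕ := fun i ↦ if i = i₀ ∨ i = i₁ then z i else z i % t
  have hz : z = w + t • q := funext fun i ↦ by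
    by_cases hi : i = i₀ ∨ i = i₁ <;> simp [w, q, hi, Nat.mod_add_div]
  have hexchange (i : Fin k) : (g i₁ - g i) * g i₀ + (g i - g i₀) * g i₁ = t * g i := by
    simp only [t]; zify [h₀ i, h₁ i, hlt.le]; ring
  refine ⟨w + Pi.single i₀ (q ⬝ᵥ fun i ↦ g i₁ - g i) + Pi.single i₁ (q ⬝ᵥ fun i ↦ g i - g i₀),
    ?_, ?_, fun i hi₀ hi₁ ↦ ?_⟩
  · rw [hz, add_dotProduct, add_dotProduct, add_dotProduct, single_dotProduct, single_dotProduct,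
      smul_dotProduct, smul_eq_mul, add_assoc]
    congr 1
    simp only [dotProduct, Finset.sum_mul, Finset.mul_sum, ← Finset.sum_add_distrib]
    refine Finset.sum_congr rfl fun i _ ↦ ?_
    rw [mul_assoc, mul_assoc, ← mul_add, hexchange, mul_left_comm]
  · rw [hz, add_dotProduct, add_dotProduct, add_dotProduct, single_dotProduct, single_dotProduct,
      smul_dotProduct, smul_eq_mul, add_assoc]
    congr 1
    simp only [dotProduct, Pi.one_apply, mul_one, Finset.mul_sum, ← Finset.sum_add_distrib]
    refine Finset.sum_congr rfl fun i _ ↦ ?_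
    have := h₀ i; have := h₁ i
    rw [← mul_add, mul_comm]; congr 1; omega
  · have ht : 0 < t := Nat.sub_pos_of_lt hlt
    simp [w, hi₀, hi₁, Nat.mod_lt _ ht]

theorem add_mem_lenSet_or_le (hl : l ∈ lenSet k g x) :
    l + (g i₁ - g i₀) ∈ lenSet k g x ∨ x ≤ g i₀ * l + k * (g i₁ * (g i₁ - g i₀)) := by
  obtain ⟨z₀, rfl, rfl⟩ := mem_lenSet_iff.1 hl
  obtain ⟨z, hval, hlen, hmid⟩ := exists_dotProduct_eq_forall_lt h₀ h₁ hlt z₀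
  rw [← hval, ← hlen]
  by_cases hz : g i₀ ≤ z i₁
  · left
    obtain ⟨w, rfl⟩ := exists_eq_add_single hz
    have hlen' : (w + Pi.single i₁ (g i₀)) ⬝ᵥ 1 + (g i₁ - g i₀) = w ⬝ᵥ 1 + g i₁ := by
      rw [add_single_dotProduct, Pi.one_apply, mul_one]
      omega
    rw [hlen', add_single_dotProduct, mul_comm]
    exact add_mem_lenSet_add_mul (dotProduct_mem_lenSet w) i₀ (g i₁)
  · right
    have hsplit : z ⬝ᵥ g = g i₀ * (z ⬝ᵥ 1) + z ⬝ᵥ fun i ↦ g i - g i₀ := by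
      simp only [dotProduct, Pi.one_apply, mul_one, Finset.mul_sum, ← Finset.sum_add_distrib]
      refine Finset.sum_congr rfl fun i _ ↦ ?_
      zify [h₀ i]; ring
    have hbound : (z ⬝ᵥ fun i ↦ g i - g i₀) ≤ k * (g i₁ * (g i₁ - g i₀)) := by
      refine dotProduct_le_mul fun i ↦ ?_
      rcases eq_or_ne i i₀ with rfl | hi₀
      · simp
      refine Nat.mul_le_mul ?_ (Nat.sub_le_sub_right (h₁ i) _)
      rcases eq_or_ne i i₁ with rfl | hi₁
      · omega
      · have := hmid i hi₀ hi₁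
        omega
    omega

theorem mem_image_add_lenSet_or_le (hl : l ∈ lenSet k g x) :
    l ∈ (· + (g i₁ - g i₀)) '' lenSet k g x ∨ g i₁ * l ≤ x + k * (g i₁ * (g i₁ - g i₀)) := by
  obtain ⟨z₀, rfl, rfl⟩ := mem_lenSet_iff.1 hl
  obtain ⟨z, hval, hlen, hmid⟩ := exists_dotProduct_eq_forall_lt h₀ h₁ hlt z₀
  rw [← hval, ← hlen]
  by_cases hz : g i₁ ≤ z i₀
  · left
    obtain ⟨w, rfl⟩ := exists_eq_add_single hz
    refine ⟨w ⬝ᵥ 1 + g i₀, ?_, ?_⟩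
    · rw [add_single_dotProduct, mul_comm]
      exact add_mem_lenSet_add_mul (dotProduct_mem_lenSet w) i₁ (g i₀)
    · dsimp only
      rw [add_single_dotProduct, Pi.one_apply, mul_one]
      omega
  · right
    have hsplit : g i₁ * (z ⬝ᵥ 1) = z ⬝ᵥ g + z ⬝ᵥ fun i ↦ g i₁ - g i := by
      simp only [dotProduct, Pi.one_apply, mul_one, Finset.mul_sum, ← Finset.sum_add_distrib]
      refine Finset.sum_congr rfl fun i _ ↦ ?_
      zify [h₁ i]; ring
    have hbound : (z ⬝ᵥ fun i ↦ g i₁ - g i) ≤ k * (g i₁ * (g i₁ - g i₀)) := by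
      refine dotProduct_le_mul fun i ↦ ?_
      rcases eq_or_ne i i₁ with rfl | hi₁
      · simp
      refine Nat.mul_le_mul ?_ (Nat.sub_le_sub_left (h₀ i) _)
      rcases eq_or_ne i i₀ with rfl | hi₀
      · omega
      · have := hmid i hi₀ hi₁
        omega
    omega

theorem lenSet_add_mul (hx : k * g i₁ ^ 2 < x) :
    lenSet k g (x + g i₀ * g i₁) = (· + g i₀) '' lenSet k g x ∪ (· + g i₁) '' lenSet k g x := by
  refine subset_antisymm ?_ ?_
  · intro l hl
    obtain ⟨z₀, hz₀, rfl⟩ := mem_lenSet_iff.1 hl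
    obtain ⟨z, hval, hlen, hmid⟩ := exists_dotProduct_eq_forall_lt h₀ h₁ hlt z₀
    rw [← hval] at hz₀
    rw [← hlen]
    by_cases hz₁ : g i₀ ≤ z i₁
    · obtain ⟨w, rfl⟩ := exists_eq_add_single hz₁
      rw [add_single_dotProduct, Nat.add_right_cancel_iff] at hz₀
      exact Or.inl ⟨w ⬝ᵥ 1, hz₀ ▸ dotProduct_mem_lenSet w, by simp⟩
    by_cases hz₀' : g i₁ ≤ z i₀
    · obtain ⟨w, rfl⟩ := exists_eq_add_single hz₀'
      rw [add_single_dotProduct, mul_comm, Nat.add_right_cancel_iff] at hz₀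
      exact Or.inr ⟨w ⬝ᵥ 1, hz₀ ▸ dotProduct_mem_lenSet w, by simp⟩
    have hbound : z ⬝ᵥ g ≤ k * g i₁ ^ 2 := by
      refine sq (g i₁) ▸ dotProduct_le_mul fun i ↦ Nat.mul_le_mul ?_ (h₁ i)
      rcases eq_or_ne i i₀ with rfl | hi₀
      · omega
      rcases eq_or_ne i i₁ with rfl | hi₁
      · omega
      · have := hmid i hi₀ hi₁
        omega
    omega
  · rintro _ (⟨l, hl, rfl⟩ | ⟨l, hl, rfl⟩)
    · exact add_mem_lenSet_add_mul hl i₁ (g i₀)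
    · simpa only [mul_comm] using add_mem_lenSet_add_mul hl i₀ (g i₁)

theorem add_mem_lenSet_or_mem_image_add_of_le (hx : 2 * k * g i₁ ^ 2 ≤ x) :
    ∀ p ∈ lenSet k g x, ∀ q ∈ lenSet k g x, p ≤ q →
      p + (g i₁ - g i₀) ∈ lenSet k g x ∨ q ∈ (· + (g i₁ - g i₀)) '' lenSet k g x := by
  intro p hp q hq hpq
  by_contra! ⟨hp', hq'⟩
  exact hpq.not_gt <| lt_of_le_mul_add_of_mul_le_add (Fin.pos i₀) hlt hx
    ((add_mem_lenSet_or_le h₀ h₁ hlt hp).resolve_left hp')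
    ((mem_image_add_lenSet_or_le h₀ h₁ hlt hq).resolve_left hq')

theorem deltaSet_add_mul (hx : 2 * k * g i₁ ^ 2 ≤ x) :
    deltaSet k g (x + g i₀ * g i₁) = deltaSet k g x := by
  have hx' : k * g i₁ ^ 2 < x := by
    have : 0 < k * g i₁ ^ 2 := Nat.mul_pos (Fin.pos i₀) (pow_pos (Nat.zero_lt_of_lt hlt) 2)
    rw [Nat.mul_assoc] at hx
    omega
  have himage : (· + g i₀) '' lenSet k g x ∪ (· + g i₁) '' lenSet k g x =
      (· + g i₀) '' (lenSet k g x ∪ (· + (g i₁ - g i₀)) '' lenSet k g x) := by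
    rw [Set.image_union, Set.image_image]
    congr 2
    funext l
    omega
  rw [deltaSet_eq_gapSet, deltaSet_eq_gapSet, lenSet_add_mul h₀ h₁ hlt hx', himage,
    gapSet.image_add_const,
    gapSet.union_image_add (add_mem_lenSet_or_mem_image_add_of_le h₀ h₁ hlt hx)]

end Factorization

theorem exists_pos_lt_of_forall_eq_sub {α : Type*} {F : ℕ → Set α} {N m : ℕ} (hm : 0 < m)
    (hmN : m < N) (hF : ∀ n, N ≤ n → F n = F (n - m)) {n : ℕ} (hn : 0 < n) {a : α}
    (ha : a ∈ F n) : ∃ n', 0 < n' ∧ n' < N ∧ a ∈ F n' := by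
  induction n using Nat.strong_induction_on with
  | _ n ih =>
    by_cases hnN : n < N
    · exact ⟨n, hn, hnN, ha⟩
    · exact ih (n - m) (by omega) (by omega) (hF n (by omega) ▸ ha)

/-- For S = ⟨n₁ < ⋯ < n_k⟩ and N = 2k n₂ n_k² + n₁ n_k, we have
Δ(n) = Δ(n − n₁n_k) for all n ∈ S with n ≥ N; consequently
Δ(S) is the union of Δ(n) over n ∈ S with n < N. -/
theorem stmt_19 (k : ℕ) (hk : 2 ≤ k) (gens : Fin k → ℕ)
    (hmono : StrictMono gens) (hpos : 0 < gens ⟨0, by omega⟩)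
    (N : ℕ)
    (hN : N = 2 * k * gens ⟨1, by omega⟩ * (gens ⟨k - 1, by omega⟩) ^ 2 +
      gens ⟨0, by omega⟩ * gens ⟨k - 1, by omega⟩) :
    (∀ n : ℕ, n ∈ AddSubmonoid.closure (Set.range gens) → N ≤ n →
      deltaSet k gens n =
        deltaSet k gens (n - gens ⟨0, by omega⟩ * gens ⟨k - 1, by omega⟩)) ∧
    {d : ℕ | ∃ n : ℕ, 0 < n ∧ n ∈ AddSubmonoid.closure (Set.range gens) ∧
        d ∈ deltaSet k gens n} =
      {d : ℕ | ∃ n : ℕ, 0 < n ∧ n < N ∧ n ∈ AddSubmonoid.closure (Set.range gens) ∧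
        d ∈ deltaSet k gens n} := by
  set a := gens ⟨0, by omega⟩
  set b := gens ⟨k - 1, by omega⟩
  set c := gens ⟨1, by omega⟩
  have h₀ (i : Fin k) : a ≤ gens i := hmono.monotone (Fin.le_def.2 i.val.zero_le)
  have h₁ (i : Fin k) : gens i ≤ b := hmono.monotone (Fin.le_def.2 (by simp only; omega))
  have hab : a < b := hmono (Fin.lt_def.2 (by simp only; omega))
  have hc : 0 < c := hpos.trans (hmono (Fin.lt_def.2 Nat.one_pos))
  have habN : a * b < N := by
    have : 0 < 2 * k * c * b ^ 2 :=
      Nat.mul_pos (Nat.mul_pos (by omega) hc) (pow_pos (hpos.trans hab) 2)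
    omega
  have hshift (n : ℕ) (hn : N ≤ n) : deltaSet k gens n = deltaSet k gens (n - a * b) := by
    obtain ⟨x, rfl⟩ : ∃ x, n = x + a * b := ⟨n - a * b, by omega⟩
    have hx : 2 * k * b ^ 2 ≤ x := by
      have := Nat.mul_le_mul_right (b ^ 2) (Nat.le_mul_of_pos_right (2 * k) hc)
      omega
    rw [Nat.add_sub_cancel]
    exact deltaSet_add_mul h₀ h₁ hab hx
  refine ⟨fun n _ ↦ hshift n, Set.ext fun d ↦ ⟨?_, ?_⟩⟩
  · rintro ⟨n, hn, -, hd⟩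
    obtain ⟨n', hn', hn'N, hd'⟩ :=
      exists_pos_lt_of_forall_eq_sub (Nat.mul_pos hpos (hpos.trans hab)) habN hshift hn hd
    have hne : (lenSet k gens n').Nonempty := let ⟨_, l, hl, _⟩ := hd'; ⟨l, hl⟩
    exact ⟨n', hn', hn'N, mem_closure_range_of_nonempty_lenSet hne, hd'⟩
  · rintro ⟨n, hn, -, hS, hd⟩
    exact ⟨n, hn, hS, hd⟩
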